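/- Let D ⊂ ℝ^N be convex open and bounded, P ∈ ∂D, and ν_P an outward unit normal (i.e. ν_P · (x - P) ≤ 0 for all x ∈ \bar{D}). If Q ∈ ∂D with Q ≠ P and ν_P · (P - Q) > 0 and ν_Q · (Q - P) > 0, then for all t, s ∈ (0, min(ν_P·(P-Q), ν_Q·(Q-P))), the segment endpoints P - tν_P and Q - sν_Q satisfy |P - tν_P - (Q - sν_Q)| < |P - Q|. -/

import Mathlib

/-!
With `a = ⟪ν_P, P - Q⟫`, `b = ⟪ν_Q, Q - P⟫` and `w = t ν_P - s ν_Q`, expanding the square gives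
`‖P - Q - w‖² = ‖P - Q‖² - 2 (t a + s b) + ‖w‖²`, and `‖w‖ ≤ t + s`. Since `t, s < min a b`,
`(t + s)² = t (t + s) + s (t + s) < 2 t a + 2 s b`, so the distance strictly drops.
-/

open scoped RealInnerProductSpace

section

variable {E : Type*} [NormedAddCommGroup E] [InnerProductSpace ℝ E]

theorem norm_sub_lt_norm_of_sq_lt_two_inner {v w : E} (h : ‖w‖ ^ 2 < 2 * ⟪v, w⟫) :
    ‖v - w‖ < ‖v‖ := by
  have hsq : ‖v - w‖ ^ 2 < ‖v‖ ^ 2 := by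
    rw [norm_sub_sq_real]
    linarith
  exact lt_of_pow_lt_pow_left₀ 2 (norm_nonneg _) hsq

theorem sq_add_lt_two_mul_add_mul {t s a b : ℝ} (ht : t ∈ Set.Ioo 0 (min a b))
    (hs : s ∈ Set.Ioo 0 (min a b)) : (t + s) ^ 2 < 2 * (t * a + s * b) := by
  obtain ⟨ht0, hta, htb⟩ : 0 < t ∧ t < a ∧ t < b := by
    simpa only [Set.mem_Ioo, lt_min_iff] using ht
  obtain ⟨hs0, hsa, hsb⟩ : 0 < s ∧ s < a ∧ s < b := by
    simpa only [Set.mem_Ioo, lt_min_iff] using hs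
  nlinarith [mul_lt_mul_of_pos_left (add_lt_add hta hsa) ht0,
    mul_lt_mul_of_pos_left (add_lt_add htb hsb) hs0]

theorem norm_sub_smul_sub_sub_smul_lt {x y u u' : E} (hu : ‖u‖ ≤ 1) (hu' : ‖u'‖ ≤ 1)
    {t s : ℝ} (ht : t ∈ Set.Ioo 0 (min ⟪u, x - y⟫ ⟪u', y - x⟫))
    (hs : s ∈ Set.Ioo 0 (min ⟪u, x - y⟫ ⟪u', y - x⟫)) :
    ‖(x - t • u) - (y - s • u')‖ < ‖x - y‖ := by
  have hrw : (x - t • u) - (y - s • u') = (x - y) - (t • u - s • u') := by abel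
  have hinner : ⟪x - y, t • u - s • u'⟫ = t * ⟪u, x - y⟫ + s * ⟪u', y - x⟫ := by
    have hflip : ⟪u', x - y⟫ = -⟪u', y - x⟫ := by rw [← inner_neg_right, neg_sub]
    rw [inner_sub_right, real_inner_smul_right, real_inner_smul_right, real_inner_comm u,
      real_inner_comm u', hflip]
    ring
  have hnorm : ‖t • u - s • u'‖ ≤ t + s :=
    calc ‖t • u - s • u'‖ ≤ ‖t • u‖ + ‖s • u'‖ := norm_sub_le _ _
      _ = t * ‖u‖ + s * ‖u'‖ := by
        rw [norm_smul, norm_smul, Real.norm_of_nonneg ht.1.le, Real.norm_of_nonneg hs.1.le]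
      _ ≤ t + s := by
        nlinarith [mul_le_mul_of_nonneg_left hu ht.1.le, mul_le_mul_of_nonneg_left hu' hs.1.le]
  rw [hrw]
  apply norm_sub_lt_norm_of_sq_lt_two_inner
  rw [hinner]
  calc ‖t • u - s • u'‖ ^ 2 ≤ (t + s) ^ 2 := pow_le_pow_left₀ (norm_nonneg _) hnorm 2
    _ < _ := sq_add_lt_two_mul_add_mul ht hs

end

theorem stmt16_general {N : ℕ}
    (P Q νP νQ : EuclideanSpace ℝ (Fin N))
    (hνP : ‖νP‖ = 1) (hνQ : ‖νQ‖ = 1)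
    (t s : ℝ)
    (ht : t ∈ Set.Ioo 0 (min ⟪νP, P - Q⟫ ⟪νQ, Q - P⟫))
    (hs : s ∈ Set.Ioo 0 (min ⟪νP, P - Q⟫ ⟪νQ, Q - P⟫)) :
    ‖(P - t • νP) - (Q - s • νQ)‖ < ‖P - Q‖ :=
  norm_sub_smul_sub_sub_smul_lt hνP.le hνQ.le ht hs

/-- moving two boundary points of a convex body inward along the
outward normals strictly decreases their distance. -/
theorem stmt16 {N : ℕ} (D : Set (EuclideanSpace ℝ (Fin N))) (hconv : Convex ℝ D)
    (hD : IsOpen D) (hbd : Bornology.IsBounded D)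
    (P Q νP νQ : EuclideanSpace ℝ (Fin N)) (hP : P ∈ frontier D) (hQ : Q ∈ frontier D)
    (hνP : ‖νP‖ = 1) (hνQ : ‖νQ‖ = 1)
    (hout1 : ∀ x ∈ closure D, ⟪νP, x - P⟫ ≤ 0)
    (hout2 : ∀ x ∈ closure D, ⟪νQ, x - Q⟫ ≤ 0)
    (hne : P ≠ Q) (h1 : 0 < ⟪νP, P - Q⟫) (h2 : 0 < ⟪νQ, Q - P⟫)
    (t s : ℝ)
    (ht : t ∈ Set.Ioo 0 (min ⟪νP, P - Q⟫ ⟪νQ, Q - P⟫))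
    (hs : s ∈ Set.Ioo 0 (min ⟪νP, P - Q⟫ ⟪νQ, Q - P⟫)) :
    ‖(P - t • νP) - (Q - s • νQ)‖ < ‖P - Q‖ :=
  stmt16_general P Q νP νQ hνP hνQ t s ht hs
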